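/- arXiv:2510.16864 — 7 statements merged into one kernel-verified Lean document; each statement's English description precedes it below -/
import Mathlib

section
/- Let x : [t₀,∞) → ℝⁿ be three times differentiable at t, with g : ℝⁿ → ℝ differentiable with L-Lipschitz gradient, λ, γ > 0, and suppose (λ/t²)·x''(t) + (γ/t)·x'(t) + ∇g(x(t)) = 0 holds in a neighborhood of t where also x''' exists. Then ‖x'''(t)‖ ≤ (3γ/λ + L t²/λ)·‖x'(t)‖ + (γt/λ + 2/t)·‖x''(t)‖. -/
/-!
Put `ψ = G ∘ x` with `G = ∇g`. Near `t` the equation reads `ψ = -(λ/s²) x'' - (γ/s) x'`, so `ψ` is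
differentiable at `t`, and Lipschitz continuity of `G` bounds `‖ψ'(t)‖` by `L ‖x'(t)‖`.
Solving the equation instead for `x'' = -(γ s/λ) x' - (s²/λ) ψ` and differentiating once more
expresses `x'''(t)` through `x'`, `x''`, `ψ` and `ψ'`; the triangle inequality, with the equation
bounding `‖ψ(t)‖` by `(λ/t²) ‖x''‖ + (γ/t) ‖x'‖`, gives the estimate.
-/

open Filter Topology

section DampedODE

variable {E : Type*} [NormedAddCommGroup E] [NormedSpace ℝ E]

theorem HasDerivAt.norm_le_of_lipschitz_comp {F : Type*} [NormedAddCommGroup F]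
    [NormedSpace ℝ F] {f : E → F} {L : ℝ} (hf : ∀ u v, ‖f u - f v‖ ≤ L * ‖u - v‖)
    {x : ℝ → E} {v : E} {d : F} {t : ℝ} (hx : HasDerivAt x v t)
    (hfx : HasDerivAt (f ∘ x) d t) : ‖d‖ ≤ L * ‖v‖ := by
  refine le_of_tendsto_of_tendsto' (hasDerivAt_iff_tendsto_slope.1 hfx).norm
    ((hasDerivAt_iff_tendsto_slope.1 hx).norm.const_mul L) fun s => ?_
  rw [slope_def_module, slope_def_module, norm_smul, norm_smul, mul_left_comm]
  exact mul_le_mul_of_nonneg_left (hf _ _) (norm_nonneg _)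

variable {lam γ s : ℝ} {a b c : E}

theorem field_eq_of_damped_ode (h : (lam / s ^ 2) • a + (γ / s) • b + c = 0) :
    c = -(lam / s ^ 2) • a - (γ / s) • b := by
  linear_combination (norm := module) h

theorem accel_eq_of_damped_ode (hlam : lam ≠ 0) (hs : s ≠ 0)
    (h : (lam / s ^ 2) • a + (γ / s) • b + c = 0) :
    a = -(γ * s / lam) • b - (s ^ 2 / lam) • c := by
  linear_combination (norm := skip) (s ^ 2 / lam) • h
  match_scalars <;> field_simp <;> ring

variable {G : E → E} {L t : ℝ} {x x' x'' : ℝ → E} {x''' : E}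

theorem differentiableAt_comp_of_damped_ode (ht : t ≠ 0) (hx' : DifferentiableAt ℝ x' t)
    (hx'' : DifferentiableAt ℝ x'' t)
    (hode : ∀ᶠ s in 𝓝 t, (lam / s ^ 2) • x'' s + (γ / s) • x' s + G (x s) = 0) :
    DifferentiableAt ℝ (G ∘ x) t := by
  have hrhs : DifferentiableAt ℝ (fun s => -(lam / s ^ 2) • x'' s - (γ / s) • x' s) t := by
    fun_prop (disch := positivity)
  exact hrhs.congr_of_eventuallyEq (hode.mono fun s hs => field_eq_of_damped_ode hs)

theorem third_deriv_eq_of_damped_ode (hlam : lam ≠ 0) (ht : t ≠ 0) {d : E}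
    (hx' : HasDerivAt x' (x'' t) t) (hx'' : HasDerivAt x'' x''' t) (hG : HasDerivAt (G ∘ x) d t)
    (hode : ∀ᶠ s in 𝓝 t, (lam / s ^ 2) • x'' s + (γ / s) • x' s + G (x s) = 0) :
    x''' = -((γ / lam) • x' t + (γ * t / lam) • x'' t + (2 * t / lam) • G (x t)
      + (t ^ 2 / lam) • d) := by
  have hc₁ : HasDerivAt (fun s => -(γ * s / lam)) (-(γ / lam)) t :=
    (((hasDerivAt_id t).const_mul γ).div_const lam).neg.congr_deriv (by simp)
  have hc₂ : HasDerivAt (fun s => s ^ 2 / lam) (2 * t / lam) t := by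
    simpa using (hasDerivAt_pow 2 t).div_const lam
  have hrhs := (hc₁.smul hx').sub (hc₂.smul hG)
  refine hx''.unique (hrhs.congr_of_eventuallyEq ?_) |>.trans ?_
  · filter_upwards [hode, eventually_ne_nhds ht] with s hs hs0
    exact accel_eq_of_damped_ode hlam hs0 hs
  · rw [Function.comp_apply]
    module

theorem norm_third_deriv_le_of_damped_ode (hlam : 0 < lam) (hγ : 0 ≤ γ) (ht : 0 < t)
    (hG : ∀ u v, ‖G u - G v‖ ≤ L * ‖u - v‖) (hx : HasDerivAt x (x' t) t)
    (hx' : HasDerivAt x' (x'' t) t) (hx'' : HasDerivAt x'' x''' t)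
    (hode : ∀ᶠ s in 𝓝 t, (lam / s ^ 2) • x'' s + (γ / s) • x' s + G (x s) = 0) :
    ‖x'''‖ ≤ (3 * γ / lam + L * t ^ 2 / lam) * ‖x' t‖ + (γ * t / lam + 2 / t) * ‖x'' t‖ := by
  have hGx := (differentiableAt_comp_of_damped_ode ht.ne' hx'.differentiableAt
    hx''.differentiableAt hode).hasDerivAt
  have hGx_le : ‖G (x t)‖ ≤ (lam / t ^ 2) * ‖x'' t‖ + (γ / t) * ‖x' t‖ := by
    rw [field_eq_of_damped_ode hode.self_of_nhds, neg_smul, ← neg_add', norm_neg]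
    refine (norm_add_le _ _).trans_eq ?_
    rw [norm_smul_of_nonneg (by positivity), norm_smul_of_nonneg (by positivity)]
  have hdGx_le := hx.norm_le_of_lipschitz_comp hG hGx
  calc ‖x'''‖
      ≤ (γ / lam) * ‖x' t‖ + (γ * t / lam) * ‖x'' t‖ + (2 * t / lam) * ‖G (x t)‖
          + (t ^ 2 / lam) * ‖deriv (G ∘ x) t‖ := by
        rw [third_deriv_eq_of_damped_ode hlam.ne' ht.ne' hx' hx'' hGx hode, norm_neg]
        refine norm_add₄_le.trans_eq ?_
        rw [norm_smul_of_nonneg (by positivity), norm_smul_of_nonneg (by positivity),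
          norm_smul_of_nonneg (by positivity), norm_smul_of_nonneg (by positivity)]
    _ ≤ (γ / lam) * ‖x' t‖ + (γ * t / lam) * ‖x'' t‖
          + (2 * t / lam) * ((lam / t ^ 2) * ‖x'' t‖ + (γ / t) * ‖x' t‖)
          + (t ^ 2 / lam) * (L * ‖x' t‖) := by gcongr
    _ = (3 * γ / lam + L * t ^ 2 / lam) * ‖x' t‖ + (γ * t / lam + 2 / t) * ‖x'' t‖ := by
        field_simp
        ring

end DampedODE

theorem stmt_2_general {n : ℕ} (g : EuclideanSpace ℝ (Fin n) → ℝ) (L lam γ t₀ t : ℝ)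
    (x x' x'' x''' : ℝ → EuclideanSpace ℝ (Fin n))
    (hL : ∀ u u', ‖gradient g u - gradient g u'‖ ≤ L * ‖u - u'‖)
    (hlam : 0 < lam) (hγ : 0 < γ) (ht₀ : 0 < t₀) (ht : t₀ ≤ t)
    (hx' : ∀ s, HasDerivAt x (x' s) s)
    (hx'' : ∀ s, HasDerivAt x' (x'' s) s)
    (hx''' : HasDerivAt x'' (x''' t) t)
    (hode : ∀ᶠ s in nhds t,
      (lam / s ^ 2) • x'' s + (γ / s) • x' s + gradient g (x s) = 0) :
    ‖x''' t‖ ≤ (3 * γ / lam + L * t ^ 2 / lam) * ‖x' t‖ +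
      (γ * t / lam + 2 / t) * ‖x'' t‖ :=
  norm_third_deriv_le_of_damped_ode hlam hγ.le (ht₀.trans_le ht) hL (hx' t) (hx'' t) hx''' hode

/-- Bound on the third derivative of a solution of
`(λ/t²)x''(t) + (γ/t)x'(t) + ∇g(x(t)) = 0`. -/
theorem stmt_2 {n : ℕ} (g : EuclideanSpace ℝ (Fin n) → ℝ) (L lam γ t₀ t : ℝ)
    (x x' x'' x''' : ℝ → EuclideanSpace ℝ (Fin n))
    (hg : Differentiable ℝ g)
    (hL : ∀ u u', ‖gradient g u - gradient g u'‖ ≤ L * ‖u - u'‖)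
    (hlam : 0 < lam) (hγ : 0 < γ) (ht₀ : 0 < t₀) (ht : t₀ ≤ t)
    (hx' : ∀ s, HasDerivAt x (x' s) s)
    (hx'' : ∀ s, HasDerivAt x' (x'' s) s)
    (hx''' : HasDerivAt x'' (x''' t) t)
    (hode : ∀ᶠ s in nhds t,
      (lam / s ^ 2) • x'' s + (γ / s) • x' s + gradient g (x s) = 0) :
    ‖x''' t‖ ≤ (3 * γ / lam + L * t ^ 2 / lam) * ‖x' t‖ +
      (γ * t / lam + 2 / t) * ‖x'' t‖ :=
  stmt_2_general g L lam γ t₀ t x x' x'' x''' hL hlam hγ ht₀ ht hx' hx'' hx''' hode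
end

section
/- Let 1 ≤ p < ∞ and 1 ≤ r ≤ ∞. If F : [0,∞) → [0,∞) is locally absolutely continuous with F ∈ Lᵖ([0,∞)), and G : [0,∞) → ℝ with G ∈ Lʳ([0,∞)) satisfies F'(t) ≤ G(t) for almost every t ≥ 0, then lim_{t→∞} F(t) = 0. -/
/-!
Since `F' ≤ G` and `Lʳ ⊆ L^∞ + L¹`, far out `F` can increase by at most `ε / 2` over any interval
of a suitable length `δ`. So if `F t ≥ ε` for a large `t`, then `F ≥ ε / 2` on `(t - δ, t]`, which
puts mass at least `(ε / 2) ^ p * δ` into the tail `∫_{t - δ}^∞ F ^ p`; but that tail tends to `0`.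
-/

open MeasureTheory Set Filter Topology
open scoped ENNReal

lemma tendsto_setIntegral_Ioi_atTop_zero {g : ℝ → ℝ} {a : ℝ} (hg : IntegrableOn g (Ioi a)) :
    Tendsto (fun x => ∫ y in Ioi x, g y) atTop (𝓝 0) := by
  have hempty : (⋂ x : ℝ, Ioi x) = ∅ :=
    eq_empty_of_forall_notMem fun y hy => lt_irrefl y (mem_iInter.1 hy y)
  simpa [hempty] using tendsto_setIntegral_of_antitone (fun _ => measurableSet_Ioi)
    (fun _ _ h => Ioi_subset_Ioi h) ⟨a, hg⟩

lemma MeasureTheory.MemLp.exists_norm_le_const_add_integrable {α E : Type*} [MeasurableSpace α]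
    {μ : Measure α} [NormedAddCommGroup E] {G : α → E} {r : ℝ≥0∞} (hr : 1 ≤ r)
    (hG : MemLp G r μ) :
    ∃ C : ℝ, 0 ≤ C ∧ ∃ H : α → ℝ, (∀ x, 0 ≤ H x) ∧ Integrable H μ ∧
      ∀ᵐ x ∂μ, ‖G x‖ ≤ C + H x := by
  rcases eq_or_ne r ∞ with rfl | hr_top
  · refine ⟨lpNorm G ∞ μ, lpNorm_nonneg, 0, fun _ => le_rfl, integrable_zero _ _ _, ?_⟩
    simpa using ae_le_lpNorm_exponent_top hG
  · have hr0 : r ≠ 0 := (one_pos.trans_le hr).ne'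
    refine ⟨1, zero_le_one, fun x => ‖G x‖ ^ r.toReal, fun x => by positivity,
      hG.integrable_norm_rpow hr0 hr_top, Eventually.of_forall fun x => ?_⟩
    have hr1 : 1 ≤ r.toReal := by simpa using ENNReal.toReal_mono hr_top hr
    rcases le_total ‖G x‖ 1 with h | h
    · linarith [Real.rpow_nonneg (norm_nonneg (G x)) r.toReal]
    · linarith [Real.self_le_rpow_of_one_le h hr1]

lemma intervalIntegral_le_mul_add_setIntegral_Ioi {f H : ℝ → ℝ} {C a s t : ℝ} (has : a ≤ s)
    (hst : s ≤ t) (hf : IntervalIntegrable f volume s t) (hH0 : ∀ x, 0 ≤ H x)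
    (hH : IntegrableOn H (Ioi a)) (hfH : ∀ᵐ x ∂volume.restrict (Ioi a), f x ≤ C + H x) :
    ∫ x in s..t, f x ≤ C * (t - s) + ∫ x in Ioi a, H x := by
  have hsub : Ioc s t ⊆ Ioi a := fun x hx => has.trans_lt hx.1
  have hC : IntegrableOn (fun _ => C) (Ioc s t) := integrableOn_const measure_Ioc_lt_top.ne
  rw [intervalIntegral.integral_of_le hst]
  calc ∫ x in Ioc s t, f x ≤ ∫ x in Ioc s t, (C + H x) :=
        setIntegral_mono_ae_restrict hf.1 (hC.add (hH.mono_set hsub))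
          (ae_restrict_of_ae_restrict_of_subset hsub hfH)
    _ = C * (t - s) + ∫ x in Ioc s t, H x := by
        rw [integral_add hC (hH.mono_set hsub), setIntegral_const,
          Real.volume_real_Ioc_of_le hst, smul_eq_mul, mul_comm]
    _ ≤ C * (t - s) + ∫ x in Ioi a, H x :=
        add_le_add_right (setIntegral_mono_set hH (Eventually.of_forall hH0) hsub.eventuallyLE) _

lemma exists_pos_eventually_intervalIntegral_le {f H : ℝ → ℝ} {C a : ℝ} (hC : 0 ≤ C)
    (hf : ∀ t, a < t → IntervalIntegrable f volume a t) (hH0 : ∀ x, 0 ≤ H x)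
    (hH : IntegrableOn H (Ioi a)) (hfH : ∀ᵐ x ∂volume.restrict (Ioi a), f x ≤ C + H x)
    {ε : ℝ} (hε : 0 < ε) :
    ∃ δ > 0, ∀ᶠ t in atTop, ∀ s ∈ Ioc (t - δ) t, ∫ x in s..t, f x ≤ ε := by
  set δ := ε / 2 / (C + 1)
  have hCδ : C * δ ≤ ε / 2 := by
    calc C * δ ≤ (C + 1) * δ := by gcongr; linarith
      _ = ε / 2 := mul_div_cancel₀ _ (by positivity)
  have htail : Tendsto (fun t => ∫ x in Ioi (t - δ), H x) atTop (𝓝 0) :=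
    (tendsto_setIntegral_Ioi_atTop_zero hH).comp (tendsto_atTop_add_const_right _ _ tendsto_id)
  refine ⟨δ, by positivity, ?_⟩
  filter_upwards [htail.eventually (gt_mem_nhds (half_pos hε)), eventually_ge_atTop (a + δ)]
    with t htail_t hat s hs
  have has : a < s := by linarith [hs.1]
  calc ∫ x in s..t, f x ≤ C * (t - s) + ∫ x in Ioi (t - δ), H x :=
        intervalIntegral_le_mul_add_setIntegral_Ioi hs.1.le hs.2
          ((hf s has).symm.trans (hf t (has.trans_le hs.2))) hH0
          (hH.mono_set (Ioi_subset_Ioi (by linarith)))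
          (ae_restrict_of_ae_restrict_of_subset (Ioi_subset_Ioi (by linarith)) hfH)
    _ ≤ ε := by
        have : C * (t - s) ≤ C * δ := by gcongr; linarith [hs.1]
        linarith [htail_t.le]

lemma tendsto_zero_of_memLp_of_sub_le {F : ℝ → ℝ} {p : ℝ≥0∞} {a : ℝ} (hp0 : p ≠ 0)
    (hp : p ≠ ∞) (hFLp : MemLp F p (volume.restrict (Ici a))) (hF0 : ∀ᶠ t in atTop, 0 ≤ F t)
    (hinc : ∀ ε > 0, ∃ δ > 0, ∀ᶠ t in atTop, ∀ s ∈ Ioc (t - δ) t, F t - F s ≤ ε) :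
    Tendsto F atTop (𝓝 0) := by
  refine tendsto_order.2 ⟨fun b hb => hF0.mono fun t ht => hb.trans_le ht, fun ε hε => ?_⟩
  obtain ⟨δ, hδ, hinc⟩ := hinc (ε / 2) (half_pos hε)
  set q := p.toReal
  have hFq : IntegrableOn (fun x => ‖F x‖ ^ q) (Ioi a) :=
    IntegrableOn.mono_set (hFLp.integrable_norm_rpow hp0 hp) Ioi_subset_Ici_self
  have hshift : Tendsto (fun t => t - δ) atTop atTop := tendsto_atTop_add_const_right _ _ tendsto_id
  have hc : 0 < (ε / 2) ^ q * δ := by positivity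
  filter_upwards [hinc, hshift.eventually (eventually_forall_ge_atTop.2 hF0),
    hshift.eventually ((tendsto_setIntegral_Ioi_atTop_zero hFq).eventually (gt_mem_nhds hc)),
    hshift.eventually (eventually_ge_atTop a)] with t hinc_t hF0_t htail hat
  by_contra! hFt
  have hlow : ∀ s ∈ Ioc (t - δ) t, (ε / 2) ^ q ≤ ‖F s‖ ^ q := fun s hs => by
    have := hinc_t s hs
    rw [Real.norm_of_nonneg (hF0_t s hs.1.le)]
    exact Real.rpow_le_rpow (by positivity) (by linarith) ENNReal.toReal_nonneg
  have hmass : (ε / 2) ^ q * δ ≤ ∫ x in Ioc (t - δ) t, ‖F x‖ ^ q := by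
    simpa [Real.volume_real_Ioc, hδ.le] using setIntegral_ge_of_const_le_real measurableSet_Ioc
      measure_Ioc_lt_top.ne hlow (hFq.mono_set fun x hx => hat.trans_lt hx.1)
  have hsub : ∫ x in Ioc (t - δ) t, ‖F x‖ ^ q ≤ ∫ x in Ioi (t - δ), ‖F x‖ ^ q :=
    setIntegral_mono_set (hFq.mono_set (Ioi_subset_Ioi hat))
      (Eventually.of_forall fun x => by positivity) Ioc_subset_Ioi_self.eventuallyLE
  linarith

theorem stmt_4_general (p r : ENNReal) (hp : 1 ≤ p) (hp' : p < ⊤) (hr : 1 ≤ r)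
    (F G f : ℝ → ℝ)
    (hFpos : ∀ t : ℝ, 0 ≤ t → 0 ≤ F t)
    (hloc : ∀ T : ℝ, 0 < T → IntegrableOn f (Set.Icc 0 T))
    (hF : ∀ t : ℝ, 0 ≤ t → F t = F 0 + ∫ s in (0:ℝ)..t, f s)
    (hFLp : MemLp F p (volume.restrict (Set.Ici (0:ℝ))))
    (hGLr : MemLp G r (volume.restrict (Set.Ici (0:ℝ))))
    (hle : ∀ᵐ t : ℝ, t ∈ Set.Ici (0:ℝ) → f t ≤ G t) :
    Filter.Tendsto F Filter.atTop (nhds 0) := by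
  obtain ⟨C, hC, H, hH0, hH : IntegrableOn H (Ici 0) volume, hGH⟩ :=
    hGLr.exists_norm_le_const_add_integrable hr
  have hfH : ∀ᵐ x ∂volume.restrict (Ioi 0), f x ≤ C + H x := by
    filter_upwards [ae_restrict_of_ae_restrict_of_subset Ioi_subset_Ici_self hGH,
      ae_restrict_of_ae hle, ae_restrict_mem measurableSet_Ioi] with x hGx hfx hx
    exact (hfx (mem_Ici.2 hx.le)).trans ((le_abs_self _).trans hGx)
  have hf : ∀ t, 0 < t → IntervalIntegrable f volume 0 t := fun t ht =>
    (intervalIntegrable_iff_integrableOn_Icc_of_le ht.le).2 (hloc t ht)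
  refine tendsto_zero_of_memLp_of_sub_le (one_pos.trans_le hp).ne' hp'.ne hFLp
    (eventually_atTop.2 ⟨0, hFpos⟩) fun ε hε => ?_
  obtain ⟨δ, hδ, hinc⟩ := exists_pos_eventually_intervalIntegral_le hC hf hH0
    (hH.mono_set Ioi_subset_Ici_self) hfH hε
  refine ⟨δ, hδ, ?_⟩
  filter_upwards [hinc, eventually_gt_atTop δ] with t hinc_t hδt s hs
  have hs0 : 0 < s := by linarith [hs.1]
  rw [hF t (by linarith [hs.2]), hF s hs0.le, add_sub_add_left_eq_sub,
    intervalIntegral.integral_interval_sub_left (hf t (hs0.trans_le hs.2)) (hf s hs0)]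
  exact hinc_t s hs

/-- If `F : [0,∞) → [0,∞)` is locally absolutely continuous (`F t = F 0 + ∫₀ᵗ f`, `f`
integrable on compacts), `F ∈ Lᵖ([0,∞))` with `1 ≤ p < ∞`, and `f(t) ≤ G(t)` a.e. with
`G ∈ Lʳ([0,∞))`, `1 ≤ r ≤ ∞`, then `F(t) → 0` as `t → ∞`. -/
theorem stmt_4 (p r : ENNReal) (hp : 1 ≤ p) (hp' : p < ⊤) (hr : 1 ≤ r) (hr' : r ≤ ⊤)
    (F G f : ℝ → ℝ)
    (hFpos : ∀ t : ℝ, 0 ≤ t → 0 ≤ F t)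
    (hloc : ∀ T : ℝ, 0 < T → IntegrableOn f (Set.Icc 0 T))
    (hF : ∀ t : ℝ, 0 ≤ t → F t = F 0 + ∫ s in (0:ℝ)..t, f s)
    (hFLp : MemLp F p (volume.restrict (Set.Ici (0:ℝ))))
    (hGLr : MemLp G r (volume.restrict (Set.Ici (0:ℝ))))
    (hle : ∀ᵐ t : ℝ, t ∈ Set.Ici (0:ℝ) → f t ≤ G t) :
    Filter.Tendsto F Filter.atTop (nhds 0) :=
  stmt_4_general p r hp hp' hr F G f hFpos hloc hF hFLp hGLr hle
end

section
/- Let x : [t₀,∞) → ℝⁿ be twice differentiable. If the functions t ↦ t^{-3/2}·x''(t) and t ↦ t^{-1/2}·x'(t) both belong to L²([t₀,∞), ℝⁿ), then lim_{t→∞} (1/t)·x'(t) = 0. -/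
open MeasureTheory

/-!
Put `F t = ‖x' t‖² / t²`. Cauchy–Schwarz and AM–GM give
`F' ≤ ‖x''‖² / t³ + ‖x'‖² / t =: G`, so `F t ≤ F s + ∫ₛᵗ G` for `t₀ ≤ s ≤ t`, and `G` is integrable
on `[t₀, ∞)`; so is `F`, because `F t ≤ t₀⁻¹ ‖x' t‖² / t`. An integrable function is small at
arbitrarily late times, and the tails of `∫ G` are small, hence `F t → 0`.
-/

open Filter Set Topology
open scoped RealInnerProductSpace

section

variable {E : Type*} [NormedAddCommGroup E] {f : ℝ → E} {a : ℝ}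

theorem MeasureTheory.IntegrableOn.frequently_norm_lt_atTop (hf : IntegrableOn f (Ici a))
    {ε : ℝ} (hε : 0 < ε) : ∃ᶠ t in atTop, ‖f t‖ < ε := by
  intro h
  obtain ⟨T, hT⟩ := eventually_atTop.1 h
  have hconst : IntegrableOn (fun _ => ε) (Ici (max a T)) := by
    refine Integrable.mono' (hf.mono_set (Ici_subset_Ici.2 (le_max_left a T))).norm
      aestronglyMeasurable_const ?_
    filter_upwards [ae_restrict_mem measurableSet_Ici] with t ht
    simpa [abs_of_pos hε] using hT t (le_of_max_le_right ht)
  simp [integrableOn_const_iff, hε.ne'] at hconst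

theorem MeasureTheory.IntegrableOn.exists_forall_norm_intervalIntegral_lt [NormedSpace ℝ E]
    (hf : IntegrableOn f (Ici a)) {ε : ℝ} (hε : 0 < ε) :
    ∃ T, a ≤ T ∧ ∀ s t, T ≤ s → T ≤ t → ‖∫ u in s..t, f u‖ < ε := by
  have hcauchy : CauchySeq fun r => ∫ u in a..r, f u :=
    (intervalIntegral_tendsto_integral_Ioi a (hf.mono_set Ioi_subset_Ici_self)
      tendsto_id).cauchySeq
  obtain ⟨N, hN⟩ := Metric.cauchySeq_iff.1 hcauchy ε hε
  refine ⟨max a N, le_max_left a N, fun s t hs ht => ?_⟩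
  have hint : ∀ r, a ≤ r → IntervalIntegrable f volume a r := fun r hr =>
    (hf.mono_set (by simp [uIcc_of_le hr, Icc_subset_Ici_self])).intervalIntegrable
  rw [← intervalIntegral.integral_interval_sub_left (hint t (le_of_max_le_left ht))
    (hint s (le_of_max_le_left hs)), ← dist_eq_norm]
  exact hN t (le_of_max_le_right ht) s (le_of_max_le_right hs)

theorem MeasureTheory.IntegrableOn.norm_sq_div_sq {g : ℝ → E} {t₀ : ℝ} (ht₀ : 0 < t₀)
    (hg : Continuous g) (h : IntegrableOn (fun t => 1 / t * ‖g t‖ ^ 2) (Ici t₀)) :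
    IntegrableOn (fun t => ‖g t‖ ^ 2 / t ^ 2) (Ici t₀) := by
  have hpos : ∀ t ∈ Ici t₀, 0 < t := fun t ht => ht₀.trans_le ht
  refine (h.const_mul t₀⁻¹).mono' ?_ ?_
  · exact ((hg.norm.pow 2).continuousOn.div (continuous_pow 2).continuousOn
      fun t ht => pow_ne_zero 2 (hpos t ht).ne').aestronglyMeasurable measurableSet_Ici
  · filter_upwards [ae_restrict_mem measurableSet_Ici] with t ht
    have ht' := hpos t ht
    rw [Real.norm_of_nonneg (by positivity)]
    calc ‖g t‖ ^ 2 / t ^ 2 = t⁻¹ * (1 / t * ‖g t‖ ^ 2) := by ring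
      _ ≤ t₀⁻¹ * (1 / t * ‖g t‖ ^ 2) := by gcongr; exact ht

end

theorem tendsto_zero_of_integrableOn_of_hasDerivAt_le {F F' G : ℝ → ℝ} {a : ℝ}
    (hF : ∀ t ∈ Ici a, HasDerivAt F (F' t) t) (hF'G : ∀ t ∈ Ici a, F' t ≤ G t)
    (hF₀ : ∀ t ∈ Ici a, 0 ≤ F t) (hFint : IntegrableOn F (Ici a))
    (hGint : IntegrableOn G (Ici a)) :
    Tendsto F atTop (𝓝 0) := by
  have hgrowth : ∀ s t, a ≤ s → s ≤ t → F t ≤ F s + ∫ u in s..t, G u := by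
    intro s t hs hst
    have hIcc : Icc s t ⊆ Ici a := (Icc_subset_Ici_iff hst).2 hs
    have := intervalIntegral.sub_le_integral_of_hasDeriv_right_of_le hst
      (fun u hu => (hF u (hIcc hu)).continuousAt.continuousWithinAt)
      (fun u hu => (hF u (hIcc (Ioo_subset_Icc_self hu))).hasDerivWithinAt)
      (hGint.mono_set hIcc) (fun u hu => hF'G u (hIcc (Ioo_subset_Icc_self hu)))
    linarith
  rw [Metric.tendsto_atTop]
  intro ε hε
  obtain ⟨T, haT, hT⟩ := hGint.exists_forall_norm_intervalIntegral_lt (half_pos hε)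
  obtain ⟨s, hTs, hs⟩ := (hFint.frequently_norm_lt_atTop (half_pos hε)).forall_exists_of_atTop T
  refine ⟨s, fun t hst => ?_⟩
  have hat : a ≤ t := haT.trans (hTs.trans hst)
  rw [Real.dist_0_eq_abs, abs_of_nonneg (hF₀ t hat)]
  linarith [hgrowth s t (haT.trans hTs) hst, hT s t hTs (hTs.trans hst),
    Real.le_norm_self (F s), Real.le_norm_self (∫ u in s..t, G u)]

section

variable {E : Type*} [NormedAddCommGroup E] [InnerProductSpace ℝ E]

theorem HasDerivAt.norm_sq_div_sq {f : ℝ → E} {f' : E} {t : ℝ} (hf : HasDerivAt f f' t)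
    (ht : t ≠ 0) :
    HasDerivAt (fun s => ‖f s‖ ^ 2 / s ^ 2) ((2 * ⟪f t, f'⟫ * t - 2 * ‖f t‖ ^ 2) / t ^ 3) t := by
  refine (hf.norm_sq.div (hasDerivAt_pow 2 t) (pow_ne_zero 2 ht)).congr_deriv ?_
  field_simp
  ring

theorem two_mul_inner_mul_sub_div_le (u v : E) {t : ℝ} (ht : 0 < t) :
    (2 * ⟪u, v⟫ * t - 2 * ‖u‖ ^ 2) / t ^ 3 ≤ 1 / t ^ 3 * ‖v‖ ^ 2 + 1 / t * ‖u‖ ^ 2 := by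
  have hrhs : 1 / t ^ 3 * ‖v‖ ^ 2 + 1 / t * ‖u‖ ^ 2 = (‖v‖ ^ 2 + t ^ 2 * ‖u‖ ^ 2) / t ^ 3 := by
    field_simp
  rw [hrhs]
  gcongr
  nlinarith [real_inner_le_norm u v, sq_nonneg (‖v‖ - t * ‖u‖), norm_nonneg u, norm_nonneg v]

end

theorem stmt_5_general {n : ℕ} (t₀ : ℝ) (ht₀ : 0 < t₀)
    (x' x'' : ℝ → EuclideanSpace ℝ (Fin n))
    (hx'' : ∀ t, HasDerivAt x' (x'' t) t)
    (h2 : IntegrableOn (fun t : ℝ => (1 / t ^ 3) * ‖x'' t‖ ^ 2) (Set.Ici t₀))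
    (h1 : IntegrableOn (fun t : ℝ => (1 / t) * ‖x' t‖ ^ 2) (Set.Ici t₀)) :
    Filter.Tendsto (fun t : ℝ => (1 / t) • x' t) Filter.atTop (nhds 0) := by
  have hpos : ∀ t ∈ Ici t₀, 0 < t := fun t ht => ht₀.trans_le ht
  have hx' : Continuous x' := continuous_iff_continuousAt.2 fun t => (hx'' t).continuousAt
  have hF : Tendsto (fun t => ‖x' t‖ ^ 2 / t ^ 2) atTop (𝓝 0) :=
    tendsto_zero_of_integrableOn_of_hasDerivAt_le
      (fun t ht => (hx'' t).norm_sq_div_sq (hpos t ht).ne')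
      (fun t ht => two_mul_inner_mul_sub_div_le (x' t) (x'' t) (hpos t ht))
      (fun t _ => by positivity) (h1.norm_sq_div_sq ht₀ hx') (h2.add h1)
  rw [tendsto_zero_iff_norm_tendsto_zero]
  convert hF.sqrt using 2 with t
  · rw [Real.sqrt_div (sq_nonneg _), Real.sqrt_sq (norm_nonneg _), Real.sqrt_sq_eq_abs, norm_smul,
      norm_div, norm_one, Real.norm_eq_abs, one_div_mul_eq_div]
  · simp

/-- If `t ↦ t^{-3/2} x''(t)` and `t ↦ t^{-1/2} x'(t)` are in `L²([t₀,∞))`, then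
`(1/t) x'(t) → 0` as `t → ∞`. -/
theorem stmt_5 {n : ℕ} (t₀ : ℝ) (ht₀ : 0 < t₀)
    (x x' x'' : ℝ → EuclideanSpace ℝ (Fin n))
    (hx' : ∀ t, HasDerivAt x (x' t) t)
    (hx'' : ∀ t, HasDerivAt x' (x'' t) t)
    (hcont : Continuous x'')
    (h2 : IntegrableOn (fun t : ℝ => (1 / t ^ 3) * ‖x'' t‖ ^ 2) (Set.Ici t₀))
    (h1 : IntegrableOn (fun t : ℝ => (1 / t) * ‖x' t‖ ^ 2) (Set.Ici t₀)) :
    Filter.Tendsto (fun t : ℝ => (1 / t) • x' t) Filter.atTop (nhds 0) :=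
  stmt_5_general t₀ ht₀ x' x'' hx'' h2 h1
end

section
/- Let θ ∈ (1/2, 1), α > 0, and let σ : [t', ∞) → (0, ∞) be differentiable satisfying σ'(t) ≤ -α·t·σ(t)^{θ/(1-θ)} for all t ≥ t'. Then there exist a₃, a₄ > 0 such that σ(t) ≤ (a₃ t² + a₄)^{-(1-θ)/(2θ-1)} for all t ≥ t'. -/
/-!
Since `q = θ / (1 - θ) > 1`, the substitution `g = σ ^ (1 - q)` linearises the differential
inequality: `g' = (1 - q) σ ^ (-q) σ' ≥ (q - 1) α t`. Hence `g` grows at least like a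
quadratic with positive leading coefficient, and `σ = g ^ (1 - q)⁻¹` with `(1 - q)⁻¹ < 0`
decays at the claimed rate.
-/

open Set

theorem half_mul_sq_sub_sq_le_sub_of_mul_le_deriv {f f' : ℝ → ℝ} {a c : ℝ}
    (hf : ∀ t ≥ a, HasDerivAt f (f' t) t) (hf' : ∀ t ≥ a, c * t ≤ f' t) :
    ∀ t ≥ a, c / 2 * (t ^ 2 - a ^ 2) ≤ f t - f a := by
  have hderiv : ∀ t ≥ a, HasDerivAt (fun s => f s - c / 2 * s ^ 2) (f' t - c * t) t := fun t ht =>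
    (hf t ht).sub (((hasDerivAt_pow 2 t).const_mul (c / 2)).congr_deriv (by ring))
  have hmono : MonotoneOn (fun s => f s - c / 2 * s ^ 2) (Ici a) := by
    refine monotoneOn_of_hasDerivWithinAt_nonneg (f' := fun t => f' t - c * t) (convex_Ici a)
      (fun t ht => (hderiv t ht).continuousAt.continuousWithinAt) (fun t ht => ?_) (fun t ht => ?_)
    all_goals rw [interior_Ici] at ht
    · exact (hderiv t (le_of_lt ht)).hasDerivWithinAt
    · linarith [hf' t (le_of_lt ht)]
  intro t ht
  linarith [hmono self_mem_Ici (mem_Ici.2 ht) ht]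

theorem sub_one_mul_le_of_le_neg_mul_rpow {q k s s' : ℝ} (hq : 1 ≤ q) (hs : 0 < s)
    (h : s' ≤ -k * s ^ q) : (q - 1) * k ≤ s' * (1 - q) * s ^ (-q) := by
  have hcancel : s ^ q * s ^ (-q) = 1 := by
    rw [← Real.rpow_add hs, add_neg_cancel, Real.rpow_zero]
  calc (q - 1) * k = (q - 1) * s ^ (-q) * (k * s ^ q) := by linear_combination -(q - 1) * k * hcancel
    _ ≤ (q - 1) * s ^ (-q) * -s' := by gcongr; linarith
    _ = s' * (1 - q) * s ^ (-q) := by ring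

theorem add_mul_sq_sub_sq_le_rpow_one_sub {σ σ' : ℝ → ℝ} {q k a : ℝ} (hq : 1 ≤ q)
    (hpos : ∀ t ≥ a, 0 < σ t) (hderiv : ∀ t ≥ a, HasDerivAt σ (σ' t) t)
    (hineq : ∀ t ≥ a, σ' t ≤ -k * t * σ t ^ q) :
    ∀ t ≥ a, σ a ^ (1 - q) + (q - 1) * k / 2 * (t ^ 2 - a ^ 2) ≤ σ t ^ (1 - q) := by
  have hgrowth := half_mul_sq_sub_sq_le_sub_of_mul_le_deriv (f := fun t => σ t ^ (1 - q))
    (f' := fun t => σ' t * (1 - q) * σ t ^ (-q)) (c := (q - 1) * k)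
    (fun t ht => by
      simpa using (hderiv t ht).rpow_const (p := 1 - q) (Or.inl (hpos t ht).ne'))
    (fun t ht => by
      simpa [mul_assoc] using sub_one_mul_le_of_le_neg_mul_rpow hq (hpos t ht)
        (by simpa [mul_assoc] using hineq t ht))
  intro t ht
  linarith [hgrowth t ht]

theorem exists_quadratic_le_of_growth {g : ℝ → ℝ} {a c : ℝ} (ha : 0 ≤ a) (hc : 0 < c)
    (hga : 0 < g a) (hg : ∀ t ≥ a, g a + c * (t ^ 2 - a ^ 2) ≤ g t) :
    ∃ a₃ > (0 : ℝ), ∃ a₄ > (0 : ℝ), ∀ t ≥ a, a₃ * t ^ 2 + a₄ ≤ g t := by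
  -- chosen so that `a₃ ≤ c` and `a₃ * a ^ 2 + a₄ = g a`
  have hden : 0 < g a + c * a ^ 2 := by positivity
  refine ⟨c * g a / (g a + c * a ^ 2), by positivity, g a ^ 2 / (g a + c * a ^ 2), by positivity,
    fun t ht => ?_⟩
  have hsq : a ^ 2 ≤ t ^ 2 := pow_le_pow_left₀ ha ht 2
  have hcoef : c * g a / (g a + c * a ^ 2) ≤ c := by
    have : 0 ≤ c * (c * a ^ 2) := by positivity
    rw [div_le_iff₀ hden]; linarith
  calc c * g a / (g a + c * a ^ 2) * t ^ 2 + g a ^ 2 / (g a + c * a ^ 2)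
      = g a + c * g a / (g a + c * a ^ 2) * (t ^ 2 - a ^ 2) := by field_simp; ring
    _ ≤ g a + c * (t ^ 2 - a ^ 2) := by gcongr
    _ ≤ g t := hg t ht

/-- Polynomial-rate step for Łojasiewicz exponent `θ ∈ (1/2,1)`: if `σ > 0` is
differentiable with `σ'(t) ≤ -α t σ(t)^{θ/(1-θ)}`, then
`σ(t) ≤ (a₃ t² + a₄)^{-(1-θ)/(2θ-1)}` for some `a₃, a₄ > 0`. -/
theorem stmt_12 (θ t' α : ℝ) (hθ₁ : 1 / 2 < θ) (hθ₂ : θ < 1) (ht' : 0 < t') (hα : 0 < α)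
    (σ σ' : ℝ → ℝ)
    (hpos : ∀ t ≥ t', 0 < σ t)
    (hderiv : ∀ t ≥ t', HasDerivAt σ (σ' t) t)
    (hineq : ∀ t ≥ t', σ' t ≤ -α * t * (σ t) ^ (θ / (1 - θ))) :
    ∃ a₃ > (0:ℝ), ∃ a₄ > (0:ℝ), ∀ t ≥ t',
      σ t ≤ (a₃ * t ^ 2 + a₄) ^ (-((1 - θ) / (2 * θ - 1))) := by
  have h1θ : 0 < 1 - θ := by linarith
  have hq : 1 < θ / (1 - θ) := by rw [one_lt_div h1θ]; linarith
  have hexp : -((1 - θ) / (2 * θ - 1)) = (1 - θ / (1 - θ))⁻¹ := by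
    have : 1 - θ / (1 - θ) = -((2 * θ - 1) / (1 - θ)) := by field_simp; ring
    rw [this, inv_neg, inv_div]
  obtain ⟨a₃, ha₃, a₄, ha₄, hquad⟩ := exists_quadratic_le_of_growth
    (g := fun t => σ t ^ (1 - θ / (1 - θ))) (c := (θ / (1 - θ) - 1) * α / 2) ht'.le
    (by have := mul_pos (sub_pos.2 hq) hα; positivity) (Real.rpow_pos_of_pos (hpos t' le_rfl) _)
    (fun t ht => by linarith [add_mul_sq_sub_sq_le_rpow_one_sub hq.le hpos hderiv hineq t ht])
  refine ⟨a₃, ha₃, a₄, ha₄, fun t ht => ?_⟩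
  rw [hexp, Real.le_rpow_inv_iff_of_neg (hpos t ht) (by positivity) (by linarith)]
  exact hquad t ht
end

section
/- Let θ ∈ (0, 1/2), α > 0, t' > 0, and suppose σ : [t', ∞) → [0, ∞) is differentiable, nonincreasing, and satisfies σ'(t) ≤ -α·t·σ(t)^{θ/(1-θ)} whenever σ(t) > 0. Then there exists T ≥ t' such that σ(t) = 0 for all t ≥ T. -/
/-!
With `c = 1 - θ/(1-θ) = (1-2θ)/(1-θ) > 0`, the inequality says exactly that, while `σ > 0`,
the derivative of `σ^c` is at most `-c α t`. Hence `σ^c + c α t²/2` is nonincreasing, so the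
quadratic term stays bounded as long as `σ` stays positive; thus `σ` must reach `0`, and being
nonincreasing and nonnegative it stays there.
-/

open Set Filter

theorem antitoneOn_rpow_add_sq_of_deriv_le {f f' : ℝ → ℝ} {a α p : ℝ} (hp : p < 1)
    (hpos : ∀ t ≥ a, 0 < f t) (hf : ∀ t ≥ a, HasDerivAt f (f' t) t)
    (hf' : ∀ t ≥ a, f' t ≤ -α * t * f t ^ p) :
    AntitoneOn (fun t => f t ^ (1 - p) + (1 - p) * α * t ^ 2 / 2) (Ici a) := by
  have hderiv : ∀ t ≥ a, HasDerivAt (fun t => f t ^ (1 - p) + (1 - p) * α * t ^ 2 / 2)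
      (f' t * (1 - p) * f t ^ (-p) + (1 - p) * α * t) t := by
    intro t ht
    have hpow := (hf t ht).rpow_const (p := 1 - p) (Or.inl (hpos t ht).ne')
    have hsq := ((hasDerivAt_pow 2 t).const_mul ((1 - p) * α)).div_const 2
    refine (hpow.add hsq).congr_deriv ?_
    rw [sub_sub_cancel_left]
    push_cast
    ring
  refine antitoneOn_of_hasDerivWithinAt_nonpos (convex_Ici a)
    (fun t ht => (hderiv t ht).continuousAt.continuousWithinAt)
    (fun t ht => (hderiv t (interior_subset ht)).hasDerivWithinAt) fun t ht => ?_
  have ht : a ≤ t := interior_subset ht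
  have hcancel : f t ^ p * f t ^ (-p) = 1 := by
    rw [Real.rpow_neg (hpos t ht).le, mul_inv_cancel₀ (Real.rpow_pos_of_pos (hpos t ht) p).ne']
  have h1p : 0 ≤ 1 - p := by linarith
  have hrpow_nonneg := Real.rpow_nonneg (hpos t ht).le (-p)
  calc f' t * (1 - p) * f t ^ (-p) + (1 - p) * α * t
      ≤ -α * t * f t ^ p * (1 - p) * f t ^ (-p) + (1 - p) * α * t := by
        gcongr
        exact hf' t ht
    _ = 0 := by linear_combination (-α * t * (1 - p)) * hcancel

theorem exists_ge_eq_zero_of_deriv_le {f f' : ℝ → ℝ} {a α p : ℝ} (hα : 0 < α) (hp : p < 1)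
    (hnonneg : ∀ t ≥ a, 0 ≤ f t) (hf : ∀ t ≥ a, HasDerivAt f (f' t) t)
    (hf' : ∀ t ≥ a, 0 < f t → f' t ≤ -α * t * f t ^ p) :
    ∃ T ≥ a, f T = 0 := by
  by_contra! hne
  have hpos : ∀ t ≥ a, 0 < f t := fun t ht => (hnonneg t ht).lt_of_ne' (hne t ht)
  have hanti := antitoneOn_rpow_add_sq_of_deriv_le hp hpos hf fun t ht => hf' t ht (hpos t ht)
  have hsq : Tendsto (fun t : ℝ => (1 - p) * α * t ^ 2 / 2) atTop atTop :=
    ((tendsto_pow_atTop two_ne_zero).const_mul_atTop (by nlinarith)).atTop_div_const two_pos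
  obtain ⟨t, hta, htF⟩ := ((eventually_ge_atTop a).and
    (hsq.eventually_gt_atTop (f a ^ (1 - p) + (1 - p) * α * a ^ 2 / 2))).exists
  have hle := hanti self_mem_Ici hta hta
  have hrpow_nonneg := Real.rpow_nonneg (hnonneg t hta) (1 - p)
  simp only at hle
  linarith

theorem stmt_13_general (θ t' α : ℝ) (hθ₂ : θ < 1 / 2) (hα : 0 < α)
    (σ σ' : ℝ → ℝ)
    (hnonneg : ∀ t ≥ t', 0 ≤ σ t)
    (hmono : AntitoneOn σ (Set.Ici t'))
    (hderiv : ∀ t ≥ t', HasDerivAt σ (σ' t) t)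
    (hineq : ∀ t ≥ t', 0 < σ t → σ' t ≤ -α * t * (σ t) ^ (θ / (1 - θ))) :
    ∃ T ≥ t', ∀ t ≥ T, σ t = 0 := by
  have hexp : θ / (1 - θ) < 1 := (div_lt_one (by linarith)).2 (by linarith)
  obtain ⟨T, hT, hσT⟩ := exists_ge_eq_zero_of_deriv_le hα hexp hnonneg hderiv hineq
  refine ⟨T, hT, fun t ht => le_antisymm ?_ (hnonneg t (hT.trans ht))⟩
  exact hσT ▸ hmono hT (hT.trans ht) ht

/-- Finite-time convergence for Łojasiewicz exponent `θ ∈ (0,1/2)`: if `σ ≥ 0` is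
nonincreasing, differentiable, and `σ'(t) ≤ -α t σ(t)^{θ/(1-θ)}` whenever `σ(t) > 0`,
then `σ` vanishes from some time `T` on. -/
theorem stmt_13 (θ t' α : ℝ) (hθ₁ : 0 < θ) (hθ₂ : θ < 1 / 2) (ht' : 0 < t') (hα : 0 < α)
    (σ σ' : ℝ → ℝ)
    (hnonneg : ∀ t ≥ t', 0 ≤ σ t)
    (hmono : AntitoneOn σ (Set.Ici t'))
    (hderiv : ∀ t ≥ t', HasDerivAt σ (σ' t) t)
    (hineq : ∀ t ≥ t', 0 < σ t → σ' t ≤ -α * t * (σ t) ^ (θ / (1 - θ))) :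
    ∃ T ≥ t', ∀ t ≥ T, σ t = 0 :=
  stmt_13_general θ t' α hθ₂ hα σ σ' hnonneg hmono hderiv hineq
end

section
/- Let x : [t₀,∞) → ℝⁿ be C¹, let β > 0, and suppose the function t ↦ x(t) + (β/t)x'(t) is bounded on [t₁,∞) and (1/t)x'(t) → 0 as t → ∞. Then x is bounded on [t₁,∞). -/
/-- If `t ↦ x(t) + (β/t)x'(t)` is bounded on `[t₁,∞)` and `(1/t)x'(t) → 0`, then `x` is
bounded on `[t₁,∞)`. -/
theorem stmt_17 {n : ℕ} (t₀ t₁ β : ℝ) (ht₀ : 0 < t₀) (ht₁ : t₀ ≤ t₁) (hβ : 0 < β)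
    (x x' : ℝ → EuclideanSpace ℝ (Fin n))
    (hx' : ∀ t, HasDerivAt x (x' t) t)
    (hbdd : ∃ M : ℝ, ∀ t ≥ t₁, ‖x t + (β / t) • x' t‖ ≤ M)
    (hlim : Filter.Tendsto (fun t : ℝ => (1 / t) • x' t) Filter.atTop (nhds 0)) :
    ∃ K : ℝ, ∀ t ≥ t₁, ‖x t‖ ≤ K := by
  obtain ⟨M, hM⟩ := hbdd
  -- eventually the scaled derivative is small
  have h1 : ∀ᶠ t in Filter.atTop, ‖(1 / t) • x' t‖ ≤ 1 := by
    have := hlim.eventually (Metric.ball_mem_nhds (0 : EuclideanSpace ℝ (Fin n)) one_pos)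
    filter_upwards [this] with t ht
    rw [dist_zero_right] at ht
    exact ht.le
  obtain ⟨T, hT⟩ := h1.exists_forall_of_atTop
  -- x is continuous, hence bounded on the compact set [t₁, max t₁ T]
  have hcont : Continuous x := by
    exact continuous_iff_continuousAt.2 fun t => (hx' t).continuousAt
  obtain ⟨C, hC⟩ := (isCompact_Icc (a := t₁) (b := max t₁ T)).exists_bound_of_continuousOn
    hcont.continuousOn
  refine ⟨max C (M + β), fun t ht => ?_⟩
  by_cases htT : t ≤ max t₁ T
  · exact le_trans (hC t ⟨ht, htT⟩) (le_max_left _ _)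
  · push_neg at htT
    have htT' : T ≤ t := le_of_lt (lt_of_le_of_lt (le_max_right _ _) htT)
    have ht0 : 0 < t := lt_of_lt_of_le ht₀ (le_trans ht₁ ht)
    have key : ‖x t‖ ≤ ‖x t + (β / t) • x' t‖ + ‖(β / t) • x' t‖ := by
      have h := norm_sub_le (x t + (β / t) • x' t) ((β / t) • x' t)
      simpa using h
    have hsc : ‖(β / t) • x' t‖ ≤ β := by
      have : (β / t) • x' t = β • ((1 / t) • x' t) := by
        rw [smul_smul]; ring_nf
      rw [this, norm_smul, Real.norm_eq_abs, abs_of_pos hβ]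
      calc β * ‖(1 / t) • x' t‖ ≤ β * 1 := by
            exact mul_le_mul_of_nonneg_left (hT t htT') hβ.le
        _ = β := mul_one β
    refine le_trans key (le_trans ?_ (le_max_right _ _))
    exact add_le_add (hM t ht) hsc
end

section
/- Let u(t) = (β/t)x'(t) + x(t) and v(t) = (√((βγ+λ)/t² - βλ/t⁴) + β/t)·x'(t) + x(t) for a C² curve x : [t₁,∞) → ℝⁿ satisfying (λ/t²)x''(t) + (γ/t)x'(t) + ∇g(x(t)) = 0, where ∇g is L-Lipschitz. Then for H(u,v) = g(u) + (1/2)‖u-v‖², one has ‖∇H(u(t),v(t))‖ ≤ (λ/t²)‖x''(t)‖ + (Lβ/t + γ/t + 2√((βγ+λ)/t² - βλ/t⁴))·‖x'(t)‖ for all t ≥ t₁ at which (βγ+λ)/t² - βλ/t⁴ ≥ 0. -/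
/-!
The gradient of `H` at `(u, v)` is `(∇g(u) + (u - v), v - u)`, so its norm is at most
`‖∇g(u)‖ + 2‖u - v‖`. Along the curves, `u - v = -√(…) x'`, while `∇g(u)` differs from
`∇g(x)` by at most `L‖u - x‖ = Lβ/t ‖x'‖`, and the ODE expresses `∇g(x)` through `x'` and `x''`.
-/

open WithLp

theorem norm_toLp_prod_le {E F : Type*} [SeminormedAddCommGroup E] [SeminormedAddCommGroup F]
    (a : E) (b : F) : ‖toLp 2 (a, b)‖ ≤ ‖a‖ + ‖b‖ := by
  rw [prod_norm_eq_of_L2, toLp_fst, toLp_snd, Real.sqrt_le_left (by positivity)]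
  nlinarith [norm_nonneg a, norm_nonneg b]

section

variable {E : Type*} [NormedAddCommGroup E] [InnerProductSpace ℝ E] [CompleteSpace E]

theorem hasGradientAt_add_half_norm_sub_sq {g : E → ℝ} {g' a b : E} (hg : HasGradientAt g g' a) :
    HasGradientAt (fun p : WithLp 2 (E × E) => g p.fst + 1 / 2 * ‖p.fst - p.snd‖ ^ 2)
      (toLp 2 (g' + (a - b), b - a)) (toLp 2 (a, b)) := by
  have hg₁ := hg.hasFDerivAt.comp (toLp 2 (a, b)) (fstL 2 ℝ E E).hasFDerivAt
  have hpen := ((fstL 2 ℝ E E - sndL 2 ℝ E E).hasFDerivAt (x := toLp 2 (a, b))).norm_sq.const_mul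
    (1 / 2)
  rw [hasGradientAt_iff_hasFDerivAt]
  refine (hg₁.add hpen).congr_fderiv ?_
  ext w
  simp only [one_div, sub_apply, fstL_apply, toLp_fst, sndL_apply, toLp_snd, map_sub,
    ContinuousLinearMap.comp_sub, ContinuousLinearMap.sub_comp, add_apply,
    ContinuousLinearMap.comp_apply, InnerProductSpace.toDual_apply_apply, smul_apply,
    coe_innerSL_apply, nsmul_eq_mul, Nat.cast_ofNat, smul_eq_mul, ne_eq, OfNat.ofNat_ne_zero,
    not_false_eq_true, inv_mul_cancel_left₀, prod_inner_apply, ofLp_fst, inner_add_left,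
    inner_sub_left, ofLp_snd]
  ring

theorem norm_gradient_add_half_norm_sub_sq_le {g : E → ℝ} (hg : Differentiable ℝ g) (a b : E) :
    ‖gradient (fun p : WithLp 2 (E × E) => g p.fst + 1 / 2 * ‖p.fst - p.snd‖ ^ 2)
      (toLp 2 (a, b))‖ ≤ ‖gradient g a‖ + 2 * ‖a - b‖ := by
  rw [(hasGradientAt_add_half_norm_sub_sq (hg a).hasGradientAt).gradient]
  calc ‖toLp 2 (gradient g a + (a - b), b - a)‖
      ≤ ‖gradient g a + (a - b)‖ + ‖b - a‖ := norm_toLp_prod_le _ _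
    _ ≤ ‖gradient g a‖ + ‖a - b‖ + ‖a - b‖ := by
        rw [norm_sub_rev b a]; gcongr; exact norm_add_le _ _
    _ = ‖gradient g a‖ + 2 * ‖a - b‖ := by ring

end

theorem stmt_19_general {n : ℕ} (g : EuclideanSpace ℝ (Fin n) → ℝ) (L lam γ β t₁ : ℝ)
    (x x' x'' : ℝ → EuclideanSpace ℝ (Fin n))
    (hg : Differentiable ℝ g)
    (hL : ∀ u u', ‖gradient g u - gradient g u'‖ ≤ L * ‖u - u'‖)
    (hlam : 0 < lam) (hγ : 0 < γ) (hβ : 0 < β) (ht₁ : 0 < t₁)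
    (hode : ∀ t ≥ t₁, (lam / t ^ 2) • x'' t + (γ / t) • x' t + gradient g (x t) = 0)
    (H : WithLp 2 (EuclideanSpace ℝ (Fin n) × EuclideanSpace ℝ (Fin n)) → ℝ)
    (hH : ∀ p, H p = g ((WithLp.equiv 2 _ p).1) +
      (1 / 2) * ‖(WithLp.equiv 2 _ p).1 - (WithLp.equiv 2 _ p).2‖ ^ 2)
    (u v : ℝ → EuclideanSpace ℝ (Fin n))
    (hu : ∀ t, u t = (β / t) • x' t + x t)
    (hv : ∀ t, v t =
      (Real.sqrt ((β * γ + lam) / t ^ 2 - β * lam / t ^ 4) + β / t) • x' t + x t) :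
    ∀ t ≥ t₁, 0 ≤ (β * γ + lam) / t ^ 2 - β * lam / t ^ 4 →
      ‖gradient H ((WithLp.equiv 2
          (EuclideanSpace ℝ (Fin n) × EuclideanSpace ℝ (Fin n))).symm (u t, v t))‖ ≤
        (lam / t ^ 2) * ‖x'' t‖ +
        (L * β / t + γ / t +
          2 * Real.sqrt ((β * γ + lam) / t ^ 2 - β * lam / t ^ 4)) * ‖x' t‖ := by
  intro t ht _
  have ht₀ : 0 < t := ht₁.trans_le ht
  set s := Real.sqrt ((β * γ + lam) / t ^ 2 - β * lam / t ^ 4)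
  have hu_sub_v : ‖u t - v t‖ = s * ‖x' t‖ := by
    rw [hu, hv, norm_sub_rev, add_smul, add_assoc, add_sub_cancel_right,
      norm_smul_of_nonneg (Real.sqrt_nonneg _)]
  have hu_sub_x : ‖u t - x t‖ = β / t * ‖x' t‖ := by
    rw [hu, add_sub_cancel_right, norm_smul_of_nonneg (by positivity)]
  have hgrad_x : ‖gradient g (x t)‖ ≤ lam / t ^ 2 * ‖x'' t‖ + γ / t * ‖x' t‖ := by
    rw [eq_neg_of_add_eq_zero_right (hode t ht), norm_neg,
      ← norm_smul_of_nonneg (by positivity), ← norm_smul_of_nonneg (by positivity)]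
    exact norm_add_le _ _
  have hgrad_u : ‖gradient g (u t)‖ ≤ L * (β / t * ‖x' t‖) + ‖gradient g (x t)‖ := by
    rw [← hu_sub_x]
    linarith [hL (u t) (x t), norm_le_norm_add_norm_sub' (gradient g (u t)) (gradient g (x t))]
  rw [funext hH]
  calc _ ≤ ‖gradient g (u t)‖ + 2 * ‖u t - v t‖ := norm_gradient_add_half_norm_sub_sq_le hg _ _
    _ ≤ L * (β / t * ‖x' t‖) + (lam / t ^ 2 * ‖x'' t‖ + γ / t * ‖x' t‖) + 2 * (s * ‖x' t‖) := by
        rw [hu_sub_v]; linarith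
    _ = _ := by ring

/-- Gradient bound for the regularization `H(u,v) = g(u) + ½‖u-v‖²` along the auxiliary
curves `u(t) = (β/t)x'(t) + x(t)` and
`v(t) = (√((βγ+λ)/t² - βλ/t⁴) + β/t)x'(t) + x(t)`:
`‖∇H(u(t),v(t))‖ ≤ (λ/t²)‖x''(t)‖ + (Lβ/t + γ/t + 2√((βγ+λ)/t² - βλ/t⁴))‖x'(t)‖`. -/
theorem stmt_19 {n : ℕ} (g : EuclideanSpace ℝ (Fin n) → ℝ) (L lam γ β t₁ : ℝ)
    (x x' x'' : ℝ → EuclideanSpace ℝ (Fin n))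
    (hg : Differentiable ℝ g)
    (hL : ∀ u u', ‖gradient g u - gradient g u'‖ ≤ L * ‖u - u'‖)
    (hlam : 0 < lam) (hγ : 0 < γ) (hβ : 0 < β) (ht₁ : 0 < t₁)
    (hx' : ∀ t, HasDerivAt x (x' t) t)
    (hx'' : ∀ t, HasDerivAt x' (x'' t) t)
    (hode : ∀ t ≥ t₁, (lam / t ^ 2) • x'' t + (γ / t) • x' t + gradient g (x t) = 0)
    (H : WithLp 2 (EuclideanSpace ℝ (Fin n) × EuclideanSpace ℝ (Fin n)) → ℝ)
    (hH : ∀ p, H p = g ((WithLp.equiv 2 _ p).1) +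
      (1 / 2) * ‖(WithLp.equiv 2 _ p).1 - (WithLp.equiv 2 _ p).2‖ ^ 2)
    (u v : ℝ → EuclideanSpace ℝ (Fin n))
    (hu : ∀ t, u t = (β / t) • x' t + x t)
    (hv : ∀ t, v t =
      (Real.sqrt ((β * γ + lam) / t ^ 2 - β * lam / t ^ 4) + β / t) • x' t + x t) :
    ∀ t ≥ t₁, 0 ≤ (β * γ + lam) / t ^ 2 - β * lam / t ^ 4 →
      ‖gradient H ((WithLp.equiv 2
          (EuclideanSpace ℝ (Fin n) × EuclideanSpace ℝ (Fin n))).symm (u t, v t))‖ ≤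
        (lam / t ^ 2) * ‖x'' t‖ +
        (L * β / t + γ / t +
          2 * Real.sqrt ((β * γ + lam) / t ^ 2 - β * lam / t ^ 4)) * ‖x' t‖ :=
  stmt_19_general g L lam γ β t₁ x x' x'' hg hL hlam hγ hβ ht₁ hode H hH u v hu hv
end
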